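/- Let G be an undirected graph on vertex set V with unit edge weights, let a, b, v be three distinct vertices such that v has degree 0 in G. Form the weighted graph H by adding edges (a, v) and (b, v) each with weight −1, keeping all edges of G at weight +1. If G has no self-loops, then H contains a cycle of negative total weight if and only if (a, b) is an edge of G. -/

import Mathlib

open scoped Classical

/-!
A cycle of length `n` uses each of the two `-1` edges at most once, so its weight is at least
`n - 4`; as `n ≥ 3`, negative weight forces `n = 3` with both `av` and `bv` on the cycle. The
vertices of a closed walk of length three are pairwise adjacent, so `ab` is an edge, and it avoids
`v`, hence lies in `G`. Conversely the triangle `a b v` has weight `1 - 1 - 1 = -1`.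
-/

namespace List

variable {α : Type*}

theorem length_sub_two_mul_count_le_sum_map [BEq α] [LawfulBEq α] {W : α → ℤ} {e₁ e₂ : α}
    (hge : ∀ e, -1 ≤ W e) (hone : ∀ e, e ≠ e₁ → e ≠ e₂ → W e = 1) (L : List α) :
    (L.length : ℤ) - 2 * L.count e₁ - 2 * L.count e₂ ≤ (L.map W).sum := by
  induction L with
  | nil => simp
  | cons e L ih =>
    have hWe : (1 : ℤ) - 2 * (if e = e₁ then 1 else 0) - 2 * (if e = e₂ then 1 else 0) ≤ W e := by
      by_cases h₁ : e = e₁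
      · rw [if_pos h₁]
        split_ifs <;> linarith [hge e]
      by_cases h₂ : e = e₂
      · rw [if_neg h₁, if_pos h₂]
        linarith [hge e]
      simp [h₁, h₂, hone e h₁ h₂]
    simp only [length_cons, count_cons, map_cons, sum_cons, beq_iff_eq]
    push_cast
    split_ifs at hWe ⊢ <;> omega

theorem length_eq_three_of_sum_map_neg {W : α → ℤ} {e₁ e₂ : α}
    (hge : ∀ e, -1 ≤ W e) (hone : ∀ e, e ≠ e₁ → e ≠ e₂ → W e = 1) {L : List α} (hL : L.Nodup)
    (h3 : 3 ≤ L.length) (hneg : (L.map W).sum < 0) : L.length = 3 ∧ e₁ ∈ L ∧ e₂ ∈ L := by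
  have hbound := length_sub_two_mul_count_le_sum_map hge hone L
  have hcount : ∀ e, L.count e = if e ∈ L then 1 else 0 := fun e => by
    split_ifs with he
    exacts [count_eq_one_of_mem hL he, count_eq_zero_of_not_mem he]
  rw [hcount, hcount] at hbound
  split_ifs at hbound with h₁ h₂ <;> first | omega | exact ⟨by omega, h₁, h₂⟩

end List

namespace SimpleGraph.Walk

variable {V : Type*} {G : SimpleGraph V}

theorem adj_of_mem_support_of_length_eq_three {x a b : V} (c : G.Walk x x) (hc : c.length = 3)
    (ha : a ∈ c.support) (hb : b ∈ c.support) (hab : a ≠ b) : G.Adj a b := by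
  match c, hc with
  | .cons hxy (.cons hyz (.cons hzx .nil)), _ =>
    simp only [support_cons, support_nil, List.mem_cons, List.not_mem_nil, or_false] at ha hb
    rcases ha with rfl | rfl | rfl | rfl <;> rcases hb with rfl | rfl | rfl | rfl <;>
      first | exact absurd rfl hab | assumption | exact ‹G.Adj _ _›.symm

end SimpleGraph.Walk

theorem adj_of_fromRel_adj_of_ne {V : Type*} {G : SimpleGraph V} {a b v x y : V}
    (h : (SimpleGraph.fromRel fun p q => G.Adj p q ∨ (p = a ∧ q = v) ∨ (p = b ∧ q = v)).Adj x y)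
    (hx : x ≠ v) (hy : y ≠ v) : G.Adj x y := by
  rw [SimpleGraph.fromRel_adj] at h
  rcases h.2 with (h | ⟨-, rfl⟩ | ⟨-, rfl⟩) | (h | ⟨-, rfl⟩ | ⟨-, rfl⟩)
  exacts [h, absurd rfl hy, absurd rfl hy, h.symm, absurd rfl hx, absurd rfl hx]

theorem stmt_9_general {V : Type*} (G : SimpleGraph V) (a b v : V)
    (hab : a ≠ b) (hav : a ≠ v) (hbv : b ≠ v)
    (H : SimpleGraph V)
    (hH : H = SimpleGraph.fromRel (fun p q =>
      G.Adj p q ∨ (p = a ∧ q = v) ∨ (p = b ∧ q = v)))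
    (W : Sym2 V → ℤ)
    (hW : ∀ e : Sym2 V, W e = if e = s(a, v) ∨ e = s(b, v) then -1 else 1) :
    (∃ (x : V) (c : H.Walk x x), c.IsCycle ∧ (c.edges.map W).sum < 0)
      ↔ G.Adj a b := by
  have hW_ge : ∀ e, -1 ≤ W e := fun e => by rw [hW e]; split_ifs <;> norm_num
  have hW_eq : ∀ e, e ≠ s(a, v) → e ≠ s(b, v) → W e = 1 := fun e h₁ h₂ => by simp [hW e, h₁, h₂]
  constructor
  · rintro ⟨x, c, hc, hneg⟩
    obtain ⟨hlen, hav_mem, hbv_mem⟩ := List.length_eq_three_of_sum_map_neg hW_ge hW_eq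
      hc.edges_nodup (c.length_edges ▸ hc.three_le_length) hneg
    have hab' := c.adj_of_mem_support_of_length_eq_three (c.length_edges ▸ hlen)
      (c.fst_mem_support_of_mem_edges hav_mem) (c.fst_mem_support_of_mem_edges hbv_mem) hab
    exact adj_of_fromRel_adj_of_ne (hH ▸ hab') hav hbv
  · intro hGab
    have hab' : H.Adj a b := by simp [hH, hab, hGab]
    have hbv' : H.Adj b v := by simp [hH, hbv]
    have hva' : H.Adj v a := by simp [hH, hav.symm]
    refine ⟨a, .cons hab' (.cons hbv' (.cons hva' .nil)), ?_, ?_⟩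
    · simp [SimpleGraph.Walk.cons_isCycle_iff, hab, hav, hbv, hab.symm, hav.symm]
    · simp [hW, hab, hav, hbv, hab.symm, hav.symm, hbv.symm]

/-- Let `a, b, v` be distinct vertices of a simple graph `G` with `v`
isolated.  Add edges `(a,v)` and `(b,v)` of weight `-1`, all edges of `G`
having weight `+1`.  The resulting graph has a negative weight (simple) cycle
iff `(a,b)` is an edge of `G`. -/
theorem stmt_9 {V : Type*} (G : SimpleGraph V) (a b v : V)
    (hab : a ≠ b) (hav : a ≠ v) (hbv : b ≠ v)
    (hiso : ∀ x : V, ¬ G.Adj v x)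
    (H : SimpleGraph V)
    (hH : H = SimpleGraph.fromRel (fun p q =>
      G.Adj p q ∨ (p = a ∧ q = v) ∨ (p = b ∧ q = v)))
    (W : Sym2 V → ℤ)
    (hW : ∀ e : Sym2 V, W e = if e = s(a, v) ∨ e = s(b, v) then -1 else 1) :
    (∃ (x : V) (c : H.Walk x x), c.IsCycle ∧ (c.edges.map W).sum < 0)
      ↔ G.Adj a b :=
  stmt_9_general G a b v hab hav hbv H hH W hW
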